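/- Σ_{n=1}^{∞} H_n² / n² = ∫₀¹ ∫₀¹ (log t)(log u) / (1 - (1-t)(1-u)) du dt, where H_n = Σ_{k=1}^n 1/k is the n-th harmonic number. -/

import Mathlib

/-- The n-th harmonic number `H_n = ∑_{k=1}^n 1/k`. -/
noncomputable def H (n : ℕ) : ℝ := ∑ k ∈ Finset.Icc 1 n, (1 : ℝ) / k

/-!
Expanding `1 / (1 - (1 - t) * (1 - u))` as the geometric series `∑ ((1 - t) * (1 - u)) ^ n`, the
double integral becomes `∑ (∫₀¹ log u * (1 - u) ^ n du) ^ 2`, and integrating by parts gives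
`∫₀¹ log u * (1 - u) ^ n du = -H_{n+1} / (n + 1)`. Both exchanges of sum and integral are justified
by absolute convergence: the terms are dominated by `|log|` times a geometric series, resp. by
`H_{n+1}² / (n + 1)²`, which is summable since `H_n ≤ 1 + log n`.
-/

open MeasureTheory Real Finset

lemma H_eq_harmonic (n : ℕ) : H n = harmonic n := by
  rw [H, harmonic_eq_sum_Icc]; push_cast; simp only [one_div]

lemma H_eq_sum_range (n : ℕ) : H n = ∑ i ∈ range n, 1 / ((i : ℝ) + 1) := by
  rw [H_eq_harmonic, harmonic]; push_cast; simp only [one_div]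

lemma H_nonneg (n : ℕ) : 0 ≤ H n := by
  rw [H_eq_sum_range]; positivity

lemma H_succ_div_succ_le_one (n : ℕ) : H (n + 1) / ((n : ℝ) + 1) ≤ 1 := by
  have h : H (n + 1) ≤ n + 1 := by
    calc H (n + 1) ≤ ∑ _i ∈ range (n + 1), (1 : ℝ) := by
          rw [H_eq_sum_range]
          gcongr with i
          exact div_le_one_of_le₀ (by linarith [i.cast_nonneg (α := ℝ)]) (by positivity)
      _ = n + 1 := by simp
  exact div_le_one_of_le₀ h (by positivity)

lemma H_succ_le_rpow (n : ℕ) : H (n + 1) ≤ 5 * ((n : ℝ) + 1) ^ (1 / 4 : ℝ) := by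
  have hH : H (n + 1) ≤ 1 + log ((n : ℝ) + 1) := by
    rw [H_eq_harmonic]; exact_mod_cast harmonic_le_one_add_log (n + 1)
  have hlog := log_le_rpow_div (x := (n : ℝ) + 1) (ε := 1 / 4) (by positivity) (by norm_num)
  have hone : (1 : ℝ) ≤ ((n : ℝ) + 1) ^ (1 / 4 : ℝ) :=
    one_le_rpow (by linarith [n.cast_nonneg (α := ℝ)]) (by norm_num)
  linarith

lemma summable_sq_H_succ_div_sq :
    Summable fun n : ℕ => H (n + 1) ^ 2 / ((n : ℝ) + 1) ^ 2 := by
  have hp : Summable fun n : ℕ => 25 * ((n : ℝ) + 1) ^ (-3 / 2 : ℝ) := by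
    refine Summable.mul_left _ ?_
    have := (summable_nat_add_iff 1).mpr (summable_nat_rpow.mpr (by norm_num : (-3 / 2 : ℝ) < -1))
    simpa using this
  refine hp.of_nonneg_of_le (fun n => by positivity) fun n => ?_
  have hx : (0 : ℝ) < n + 1 := by positivity
  calc H (n + 1) ^ 2 / ((n : ℝ) + 1) ^ 2
      ≤ (5 * ((n : ℝ) + 1) ^ (1 / 4 : ℝ)) ^ 2 / ((n : ℝ) + 1) ^ 2 := by
        gcongr
        exacts [H_nonneg _, H_succ_le_rpow n]
    _ = 25 * ((n : ℝ) + 1) ^ (-3 / 2 : ℝ) := by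
        rw [mul_pow, ← rpow_natCast (((n : ℝ) + 1) ^ (1 / 4 : ℝ)) 2, ← rpow_mul hx.le,
          ← rpow_natCast ((n : ℝ) + 1) 2, mul_div_assoc, ← rpow_sub hx]
        norm_num

theorem integral_tsum_mul_of_summable {α : Type*} [MeasurableSpace α] {μ : Measure α}
    {c : ℕ → ℝ} {g : ℕ → α → ℝ} (hg : ∀ n, Integrable (g n) μ)
    (hs : Summable fun n => |c n| * ∫ x, |g n x| ∂μ) :
    ∫ x, ∑' n, c n * g n x ∂μ = ∑' n, c n * ∫ x, g n x ∂μ := by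
  rw [← integral_tsum_of_summable_integral_norm (fun n => (hg n).const_mul (c n))]
  · simp_rw [integral_const_mul]
  · simpa only [norm_mul, Real.norm_eq_abs, integral_const_mul] using hs

lemma intervalIntegrable_log_mul_one_sub_pow (n : ℕ) (a b : ℝ) :
    IntervalIntegrable (fun u => log u * (1 - u) ^ n) volume a b :=
  intervalIntegral.intervalIntegrable_log'.mul_continuousOn (by fun_prop)

/-- Integration by parts of `log u * (1 - u) ^ n` against `(1 - (1 - u) ^ (n + 1)) / (n + 1)`, the
primitive of `(1 - u) ^ n` vanishing at `0`. -/
noncomputable def logMulOneSubPowPrimitive (n : ℕ) (u : ℝ) : ℝ :=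
  ((1 - (1 - u) ^ (n + 1)) * log u
    - ∑ j ∈ range (n + 1), (1 - (1 - u) ^ (j + 1)) / ((j : ℝ) + 1)) / ((n : ℝ) + 1)

lemma continuous_logMulOneSubPowPrimitive (n : ℕ) : Continuous (logMulOneSubPowPrimitive n) := by
  -- `1 - (1 - u) ^ (n + 1) = u * ∑ (1 - u) ^ j`, and `u * log u` is continuous at `0`.
  have h : logMulOneSubPowPrimitive n = fun u => (u * log u * ∑ j ∈ range (n + 1), (1 - u) ^ j
      - ∑ j ∈ range (n + 1), (1 - (1 - u) ^ (j + 1)) / ((j : ℝ) + 1)) / ((n : ℝ) + 1) := by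
    funext u
    rw [logMulOneSubPowPrimitive, ← mul_neg_geom_sum (1 - u), sub_sub_cancel]
    ring
  rw [h]
  have := continuous_mul_log
  fun_prop

lemma hasDerivAt_logMulOneSubPowPrimitive (n : ℕ) {u : ℝ} (hu : u ≠ 0) :
    HasDerivAt (logMulOneSubPowPrimitive n) (log u * (1 - u) ^ n) u := by
  have hsub : HasDerivAt (fun v : ℝ => 1 - v) (-1) u := (hasDerivAt_id u).const_sub 1
  have hpow (k : ℕ) :
      HasDerivAt (fun v : ℝ => 1 - (1 - v) ^ (k + 1)) ((k + 1) * (1 - u) ^ k) u := by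
    refine ((hsub.fun_pow (k + 1)).const_sub 1).congr_deriv ?_
    push_cast; ring
  have hsum : HasDerivAt
      (fun v => ∑ j ∈ range (n + 1), (1 - (1 - v) ^ (j + 1)) / ((j : ℝ) + 1))
      (∑ j ∈ range (n + 1), (1 - u) ^ j) u := by
    refine HasDerivAt.fun_sum fun j _ => ?_
    refine ((hpow j).div_const ((j : ℝ) + 1)).congr_deriv ?_
    field_simp
  refine ((((hpow n).mul (hasDerivAt_log hu)).sub hsum).div_const ((n : ℝ) + 1)).congr_deriv ?_
  rw [← mul_neg_geom_sum (1 - u), sub_sub_cancel]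
  field_simp
  ring

lemma integral_log_mul_one_sub_pow (n : ℕ) :
    ∫ u in Set.Ioc (0 : ℝ) 1, log u * (1 - u) ^ n = -(H (n + 1) / ((n : ℝ) + 1)) := by
  rw [← intervalIntegral.integral_of_le zero_le_one,
    intervalIntegral.integral_eq_sub_of_hasDerivAt_of_le zero_le_one
      (continuous_logMulOneSubPowPrimitive n).continuousOn
      (fun u hu => hasDerivAt_logMulOneSubPowPrimitive n hu.1.ne')
      (intervalIntegrable_log_mul_one_sub_pow n 0 1),
    logMulOneSubPowPrimitive, logMulOneSubPowPrimitive, H_eq_sum_range]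
  simp [neg_div]

lemma integrableOn_log_mul_one_sub_pow (n : ℕ) :
    IntegrableOn (fun u => log u * (1 - u) ^ n) (Set.Ioc (0 : ℝ) 1) :=
  (intervalIntegrable_iff_integrableOn_Ioc_of_le zero_le_one).mp
    (intervalIntegrable_log_mul_one_sub_pow n 0 1)

lemma integral_abs_log_mul_one_sub_pow (n : ℕ) :
    ∫ u in Set.Ioc (0 : ℝ) 1, |log u * (1 - u) ^ n| = H (n + 1) / ((n : ℝ) + 1) := by
  have h : Set.EqOn (fun u => |log u * (1 - u) ^ n|) (fun u => -(log u * (1 - u) ^ n))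
      (Set.Ioc 0 1) := fun u ⟨hu0, hu1⟩ =>
    abs_of_nonpos (mul_nonpos_of_nonpos_of_nonneg (log_nonpos hu0.le hu1)
      (pow_nonneg (sub_nonneg.mpr hu1) n))
  rw [setIntegral_congr_fun measurableSet_Ioc h, integral_neg, integral_log_mul_one_sub_pow,
    neg_neg]

lemma div_one_sub_mul_eq_tsum {x y : ℝ} (hx : x ∈ Set.Ioc (0 : ℝ) 1) (hy : y ∈ Set.Ioc (0 : ℝ) 1)
    (a b : ℝ) :
    a * b / (1 - (1 - x) * (1 - y)) = ∑' n : ℕ, (a * (1 - x) ^ n) * (b * (1 - y) ^ n) := by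
  have hr0 : 0 ≤ (1 - x) * (1 - y) := mul_nonneg (by linarith [hx.2]) (by linarith [hy.2])
  have hr1 : (1 - x) * (1 - y) < 1 := by nlinarith [hx.1, hx.2, hy.1, hy.2]
  rw [div_eq_mul_inv, ← tsum_geometric_of_lt_one hr0 hr1, ← tsum_mul_left]
  exact tsum_congr fun n => by rw [mul_pow]; ring

lemma integral_log_mul_log_div_eq_tsum {t : ℝ} (ht : t ∈ Set.Ioc (0 : ℝ) 1) :
    ∫ u in (0 : ℝ)..1, log t * log u / (1 - (1 - t) * (1 - u))
      = ∑' n : ℕ, -(H (n + 1) / ((n : ℝ) + 1)) * (log t * (1 - t) ^ n) := by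
  rw [intervalIntegral.integral_of_le zero_le_one,
    setIntegral_congr_fun measurableSet_Ioc fun u hu => div_one_sub_mul_eq_tsum ht hu _ _,
    integral_tsum_mul_of_summable integrableOn_log_mul_one_sub_pow]
  · simp_rw [integral_log_mul_one_sub_pow]
    exact tsum_congr fun n => by ring
  · have h1t : 0 ≤ 1 - t := sub_nonneg.mpr ht.2
    have hgeom := (summable_geometric_of_lt_one h1t (by linarith [ht.1])).mul_left |log t|
    refine hgeom.of_nonneg_of_le (fun n => by positivity) fun n => ?_
    rw [integral_abs_log_mul_one_sub_pow, abs_mul, abs_of_nonneg (pow_nonneg h1t n)]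
    exact mul_le_of_le_one_right (by positivity) (H_succ_div_succ_le_one n)

theorem stmt_12 :
    ∑' n : ℕ, (H (n + 1)) ^ 2 / ((n : ℝ) + 1) ^ 2 =
      ∫ t in (0:ℝ)..1, ∫ u in (0:ℝ)..1,
        Real.log t * Real.log u / (1 - (1 - t) * (1 - u)) := by
  have hsq (n : ℕ) : -(H (n + 1) / ((n : ℝ) + 1)) * -(H (n + 1) / ((n : ℝ) + 1))
      = H (n + 1) ^ 2 / ((n : ℝ) + 1) ^ 2 := by
    rw [neg_mul_neg, div_mul_div_comm, sq, sq]
  have habs (n : ℕ) : |-(H (n + 1) / ((n : ℝ) + 1))| * (H (n + 1) / ((n : ℝ) + 1))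
      = H (n + 1) ^ 2 / ((n : ℝ) + 1) ^ 2 := by
    rw [abs_neg, abs_of_nonneg (div_nonneg (H_nonneg _) n.cast_add_one_pos.le),
      div_mul_div_comm, sq, sq]
  rw [intervalIntegral.integral_of_le zero_le_one,
    setIntegral_congr_fun measurableSet_Ioc fun t ht => integral_log_mul_log_div_eq_tsum ht,
    integral_tsum_mul_of_summable integrableOn_log_mul_one_sub_pow]
  · simp_rw [integral_log_mul_one_sub_pow, hsq]
  · simpa only [integral_abs_log_mul_one_sub_pow, habs] using summable_sq_H_succ_div_sq
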